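/- Let μ be a Borel probability measure on [0,1] with μ(X) = μ({1−t : t ∈ X}) for every Borel set X ⊆ [0,1], let f(x) = ∫₀¹ x/((1−t)x+t) dμ(t) for x > 0, and let r be the scalar-curvature function of f. Set m = 4·∫₀¹ t(1−t) dμ(t), E₂ = 16·∫₀¹ t²(1−t)² dμ(t), E₃ = 64·∫₀¹ t³(1−t)³ dμ(t), and σ² = E₂ − m². If m·(3 − 2m) < 5σ², or if m·(3 − 2m) = 5σ² and −44m³ + 70m² + 114m < 98·E₃, then r has a local minimum at the origin: there exists ε > 0 such that r(a) ≥ 6 + 36·f″(1) for all a with 0 < |a| < ε, where lim_{a→0} r(a) = 6 + 36·f″(1). -/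

import Mathlib

/-!
Write `s = 1 - 2t`. The symmetry of `μ` kills the odd moments of `s`; let `p₁, p₂, p₃` be the
moments of `s², s⁴, s⁶`, so that `m = 1 - p₁`, `E₂ = 1 - 2p₁ + p₂`, `E₃ = 1 - 3p₁ + 3p₂ - p₃`.
At `c = (1 - a)/(1 + a)` one has `(1 - t)c + t = (1 - a s)/(1 + a)`, so `f(c), f'(c), f''(c)`
are integrals of powers of `1/(1 - a s)`. Expanding these geometric series to order `a⁵` gives
`r(a) = 18p₁ - 12 + a² (W + a E(a)) / (2(1 - a²) I(a)²)` with `E, I` continuous at `0`,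
`I(0) = 1` and `W = 100p₂ - 20 - 20p₁ - 60p₁² = 20 (5σ² - m(3 - 2m))`. Since
`f''(1) = -m/2`, `18p₁ - 12 = 6 + 36 f''(1)`, and `W > 0` makes `0` a local minimum. The
boundary case `W = 0` never occurs: there the Cauchy–Schwarz inequality `p₂² ≤ p₁ p₃`
contradicts the condition on `E₃`.
-/

open MeasureTheory Filter Topology

/-- The scalar-curvature function `r(a)` of the monotone metric on `2×2` density
matrices induced by `f`, at the state with eigenvalues `(1±a)/2`;
here `c = (1−a)/(1+a)`. -/
noncomputable def scurv (f : ℝ → ℝ) (a : ℝ) : ℝ :=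
  14*(a - 1) * (deriv f ((1-a)/(1+a)))^2 / ((1+a)^3 * (f ((1-a)/(1+a)))^2)
    + 2*(a^2 + 7*a - 6) * deriv f ((1-a)/(1+a)) / ((1+a)^2 * a * f ((1-a)/(1+a)))
    + 8*(1 - a) * iteratedDeriv 2 f ((1-a)/(1+a)) / ((1+a)^3 * f ((1-a)/(1+a)))
    + 2*(1+a) * f ((1-a)/(1+a)) / a^2
    + (3*a^3 + 5*a^2 + 8*a - 4) / (2*(1+a)*a^2)

open Set

section ParametricIntegral

variable {μ : Measure ℝ} [IsFiniteMeasure μ] {s K : Set ℝ}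

theorem continuousAt_setIntegral_of_continuousOn {F : ℝ → ℝ → ℝ} {a₀ : ℝ}
    (hs : IsCompact s) (hK : IsCompact K) (hK₀ : K ∈ 𝓝 a₀)
    (hF : ContinuousOn (Function.uncurry F) (K ×ˢ s)) :
    ContinuousAt (fun a => ∫ t in s, F a t ∂μ) a₀ := by
  obtain ⟨C, hC⟩ := (hK.prod hs).exists_bound_of_continuousOn hF
  have hslice : ∀ t ∈ s, ContinuousOn (F · t) K := fun t ht =>
    hF.comp (by fun_prop) fun a ha => mk_mem_prod ha ht
  have hfiber : ∀ a ∈ K, ContinuousOn (F a) s := fun a ha =>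
    hF.comp (by fun_prop) fun t ht => mk_mem_prod ha ht
  apply continuousAt_of_dominated (bound := fun _ => C)
  · filter_upwards [hK₀] with a ha
    exact (hfiber a ha).aestronglyMeasurable hs.measurableSet
  · filter_upwards [hK₀] with a ha
    exact (ae_restrict_iff' hs.measurableSet).2 <|
      ae_of_all _ fun t ht => hC (a, t) (mk_mem_prod ha ht)
  · exact integrable_const C
  · exact (ae_restrict_iff' hs.measurableSet).2 <|
      ae_of_all _ fun t ht => (hslice t ht).continuousAt hK₀

theorem hasDerivAt_setIntegral_of_continuousOn {F F' : ℝ → ℝ → ℝ} {x₀ : ℝ}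
    (hs : IsCompact s) (hK : IsCompact K) (hK₀ : K ∈ 𝓝 x₀)
    (hF : ContinuousOn (Function.uncurry F) (K ×ˢ s))
    (hF' : ContinuousOn (Function.uncurry F') (K ×ˢ s))
    (hderiv : ∀ x ∈ K, ∀ t ∈ s, HasDerivAt (F · t) (F' x t) x) :
    HasDerivAt (fun x => ∫ t in s, F x t ∂μ) (∫ t in s, F' x₀ t ∂μ) x₀ := by
  obtain ⟨C, hC⟩ := (hK.prod hs).exists_bound_of_continuousOn hF'
  have hfiber : ∀ {G : ℝ → ℝ → ℝ}, ContinuousOn (Function.uncurry G) (K ×ˢ s) →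
      ∀ x ∈ K, ContinuousOn (G x) s := fun hG x hx =>
    hG.comp (by fun_prop) fun t ht => mk_mem_prod hx ht
  have hx₀ : x₀ ∈ K := mem_of_mem_nhds hK₀
  refine (hasDerivAt_integral_of_dominated_loc_of_deriv_le (bound := fun _ => C) hK₀ ?_
    ((hfiber hF x₀ hx₀).integrableOn_compact hs) ((hfiber hF' x₀ hx₀).aestronglyMeasurable
      hs.measurableSet) ?_ (integrable_const C) ?_).2
  · filter_upwards [hK₀] with x hx
    exact (hfiber hF x hx).aestronglyMeasurable hs.measurableSet
  · exact (ae_restrict_iff' hs.measurableSet).2 <|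
      ae_of_all _ fun t ht x hx => hC (x, t) (mk_mem_prod hx ht)
  · exact (ae_restrict_iff' hs.measurableSet).2 <| ae_of_all _ fun t ht x hx => hderiv x hx t ht

end ParametricIntegral

section Moments

variable (μ : Measure ℝ)

/-- Moments of `s = 1 - 2t`, the coordinate in which the reflection `t ↦ 1 - t` is `s ↦ -s`. -/
noncomputable def cmoment (k : ℕ) : ℝ := ∫ t in Icc 0 1, (1 - 2 * t) ^ k ∂μ

variable {μ}

theorem cmoment_even_nonneg (k : ℕ) : 0 ≤ cmoment μ (2 * k) :=
  integral_nonneg fun t => by rw [pow_mul]; positivity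

theorem map_one_sub_restrict_Icc
    (hsym : ∀ X : Set ℝ, MeasurableSet X → X ⊆ Icc 0 1 → μ X = μ ((fun t => 1 - t) '' X)) :
    (μ.restrict (Icc 0 1)).map (fun t => 1 - t) = μ.restrict (Icc 0 1) := by
  have hmeas : Measurable fun t : ℝ => 1 - t := by fun_prop
  ext A hA
  have himage : (fun t : ℝ => 1 - t) ⁻¹' A ∩ Icc 0 1 = (fun t => 1 - t) '' (A ∩ Icc 0 1) := by
    ext u
    simp only [mem_inter_iff, mem_preimage, mem_Icc, mem_image]
    constructor
    · rintro ⟨huA, hu0, hu1⟩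
      exact ⟨1 - u, ⟨huA, by linarith, by linarith⟩, by ring⟩
    · rintro ⟨v, ⟨hvA, hv0, hv1⟩, rfl⟩
      exact ⟨by simpa using hvA, by linarith, by linarith⟩
  rw [Measure.map_apply hmeas hA, Measure.restrict_apply (hmeas hA), Measure.restrict_apply hA,
    himage, ← hsym _ (hA.inter measurableSet_Icc) inter_subset_right]

theorem cmoment_odd
    (hsym : ∀ X : Set ℝ, MeasurableSet X → X ⊆ Icc 0 1 → μ X = μ ((fun t => 1 - t) '' X))
    {n : ℕ} (hn : Odd n) : cmoment μ n = 0 := by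
  have hreflect := integral_map (μ := μ.restrict (Icc 0 1)) (φ := fun t => 1 - t)
    (by fun_prop) (by fun_prop : Continuous fun t : ℝ => (1 - 2 * t) ^ n).aestronglyMeasurable
  rw [map_one_sub_restrict_Icc hsym] at hreflect
  have hneg : (fun t : ℝ => (1 - 2 * (1 - t)) ^ n) = fun t => -(1 - 2 * t) ^ n := by
    funext t
    rw [show 1 - 2 * (1 - t) = -(1 - 2 * t) by ring, hn.neg_pow]
  rw [hneg, integral_neg] at hreflect
  change cmoment μ n = -cmoment μ n at hreflect
  linarith

variable [IsFiniteMeasure μ]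

theorem integrableOn_Icc_of_continuous {g : ℝ → ℝ} (hg : Continuous g) :
    IntegrableOn g (Icc 0 1) μ :=
  hg.continuousOn.integrableOn_compact isCompact_Icc

theorem setIntegral_quartic_add (hprob : μ (Icc 0 1) = 1)
    (hodd : ∀ n, Odd n → cmoment μ n = 0) (c₀ c₁ c₂ c₃ c₄ : ℝ) {R : ℝ → ℝ}
    (hR : IntegrableOn R (Icc 0 1) μ) :
    ∫ t in Icc 0 1, (c₀ + c₁ * (1 - 2 * t) + c₂ * (1 - 2 * t) ^ 2 + c₃ * (1 - 2 * t) ^ 3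
        + c₄ * (1 - 2 * t) ^ 4 + R t) ∂μ
      = c₀ + c₂ * cmoment μ 2 + c₄ * cmoment μ 4 + ∫ t in Icc 0 1, R t ∂μ := by
  rw [integral_add _ hR, integral_add, integral_add, integral_add, integral_add]
  · have h₁ : ∫ t in Icc 0 1, (1 - 2 * t) ∂μ = 0 := by simpa [cmoment] using hodd 1 odd_one
    have h₃ := hodd 3 (by decide)
    rw [cmoment] at h₃
    simp [integral_const_mul, measureReal_def, hprob, h₁, h₃, cmoment]
  all_goals exact integrableOn_Icc_of_continuous (by fun_prop)

theorem cmoment_two_le_one (hprob : μ (Icc 0 1) = 1) : cmoment μ 2 ≤ 1 := by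
  have hle : cmoment μ 2 ≤ ∫ _ in Icc 0 1, (1 : ℝ) ∂μ := by
    refine setIntegral_mono_on (integrableOn_Icc_of_continuous (by fun_prop))
      (integrableOn_Icc_of_continuous continuous_const) measurableSet_Icc fun t ht => ?_
    nlinarith [ht.1, ht.2]
  simpa [measureReal_def, hprob] using hle

/-- Cauchy–Schwarz for `s⁴ = s · s³`. -/
theorem cmoment_four_sq_le (hprob : μ (Icc 0 1) = 1) (hodd : ∀ n, Odd n → cmoment μ n = 0) :
    cmoment μ 4 ^ 2 ≤ cmoment μ 2 * cmoment μ 6 := by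
  have hquad : ∀ L : ℝ, 0 ≤ cmoment μ 6 * (L * L) + (-2 * cmoment μ 4) * L + cmoment μ 2 := by
    intro L
    have hsq : 0 ≤ ∫ t in Icc 0 1, (L * (1 - 2 * t) ^ 3 - (1 - 2 * t)) ^ 2 ∂μ :=
      integral_nonneg fun t => sq_nonneg _
    have hexpand : ∫ t in Icc 0 1, (L * (1 - 2 * t) ^ 3 - (1 - 2 * t)) ^ 2 ∂μ
        = ∫ t in Icc 0 1, (0 + 0 * (1 - 2 * t) + 1 * (1 - 2 * t) ^ 2 + 0 * (1 - 2 * t) ^ 3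
          + (-2 * L) * (1 - 2 * t) ^ 4 + L ^ 2 * (1 - 2 * t) ^ 6) ∂μ := by
      congr 1; funext t; ring
    rw [hexpand, setIntegral_quartic_add hprob hodd _ _ _ _ _
      (integrableOn_Icc_of_continuous (by fun_prop)), integral_const_mul] at hsq
    change 0 ≤ _ + _ + _ + L ^ 2 * cmoment μ 6 at hsq
    linarith
  have hdisc := discrim_le_zero hquad
  rw [discrim] at hdisc
  nlinarith

theorem four_mul_setIntegral_mul_one_sub (hprob : μ (Icc 0 1) = 1)
    (hodd : ∀ n, Odd n → cmoment μ n = 0) :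
    4 * ∫ t in Icc 0 1, t * (1 - t) ∂μ = 1 - cmoment μ 2 := calc
  _ = ∫ t in Icc 0 1, (1 + 0 * (1 - 2 * t) + (-1) * (1 - 2 * t) ^ 2 + 0 * (1 - 2 * t) ^ 3
        + 0 * (1 - 2 * t) ^ 4 + 0) ∂μ := by
    rw [← integral_const_mul]; congr 1; funext t; ring
  _ = 1 - cmoment μ 2 := by
    rw [setIntegral_quartic_add hprob hodd _ _ _ _ _ (integrableOn_Icc_of_continuous
      continuous_const)]
    simp only [integral_zero]; ring

theorem sixteen_mul_setIntegral_sq_mul_sq (hprob : μ (Icc 0 1) = 1)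
    (hodd : ∀ n, Odd n → cmoment μ n = 0) :
    16 * ∫ t in Icc 0 1, t ^ 2 * (1 - t) ^ 2 ∂μ = 1 - 2 * cmoment μ 2 + cmoment μ 4 := calc
  _ = ∫ t in Icc 0 1, (1 + 0 * (1 - 2 * t) + (-2) * (1 - 2 * t) ^ 2 + 0 * (1 - 2 * t) ^ 3
        + 1 * (1 - 2 * t) ^ 4 + 0) ∂μ := by
    rw [← integral_const_mul]; congr 1; funext t; ring
  _ = 1 - 2 * cmoment μ 2 + cmoment μ 4 := by
    rw [setIntegral_quartic_add hprob hodd _ _ _ _ _ (integrableOn_Icc_of_continuous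
      continuous_const)]
    simp only [integral_zero]; ring

theorem sixtyfour_mul_setIntegral_cube_mul_cube (hprob : μ (Icc 0 1) = 1)
    (hodd : ∀ n, Odd n → cmoment μ n = 0) :
    64 * ∫ t in Icc 0 1, t ^ 3 * (1 - t) ^ 3 ∂μ
      = 1 - 3 * cmoment μ 2 + 3 * cmoment μ 4 - cmoment μ 6 := calc
  _ = ∫ t in Icc 0 1, (1 + 0 * (1 - 2 * t) + (-3) * (1 - 2 * t) ^ 2 + 0 * (1 - 2 * t) ^ 3
        + 3 * (1 - 2 * t) ^ 4 + (-1) * (1 - 2 * t) ^ 6) ∂μ := by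
    rw [← integral_const_mul]; congr 1; funext t; ring
  _ = 1 - 3 * cmoment μ 2 + 3 * cmoment μ 4 - cmoment μ 6 := by
    rw [setIntegral_quartic_add hprob hodd _ _ _ _ _ (integrableOn_Icc_of_continuous
      (by fun_prop)), integral_const_mul]
    simp only [cmoment]; ring

end Moments

theorem quartic_coeff_pos_of_moment_condition {m E₂ E₃ p₁ p₂ p₃ : ℝ} (hp₁ : 0 ≤ p₁)
    (hp₁' : p₁ ≤ 1) (hp₃ : 0 ≤ p₃) (hCS : p₂ ^ 2 ≤ p₁ * p₃) (hm : m = 1 - p₁)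
    (hE₂ : E₂ = 1 - 2 * p₁ + p₂)
    (hE₃ : E₃ = 1 - 3 * p₁ + 3 * p₂ - p₃)
    (hcond : m * (3 - 2*m) < 5 * (E₂ - m^2) ∨
      (m * (3 - 2*m) = 5 * (E₂ - m^2) ∧ -44*m^3 + 70*m^2 + 114*m < 98 * E₃)) :
    0 < 100 * p₂ - 20 - 20 * p₁ - 60 * p₁ ^ 2 := by
  subst hm hE₂ hE₃
  rcases hcond with hlt | ⟨heq, hlt⟩
  · nlinarith
  · -- `p₂` is determined by `p₁`, and then `p₂² ≤ p₁ p₃` is incompatible with the bound on `p₃`.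
    exfalso
    have h5p₂ : 5 * p₂ = 1 + p₁ + 3 * p₁ ^ 2 := by linear_combination -heq
    have hp₃lt : 490 * p₃ < 84 - 566 * p₁ + 1192 * p₁ ^ 2 - 220 * p₁ ^ 3 := by nlinarith
    nlinarith [mul_le_mul_of_nonneg_left hp₃lt.le hp₁, sq_nonneg (1 - p₁),
      mul_nonneg (mul_nonneg hp₁ hp₁) hp₁, mul_le_mul_of_nonneg_left hp₁' (mul_nonneg hp₁ hp₁)]

section Resolvent

theorem one_sub_mul_one_sub_two_mul_pos {a t : ℝ} (ha : |a| < 1) (ht : t ∈ Icc (0 : ℝ) 1) :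
    0 < 1 - a * (1 - 2 * t) := by
  have hs : |1 - 2 * t| ≤ 1 := abs_le.2 ⟨by linarith [ht.2], by linarith [ht.1]⟩
  have : |a * (1 - 2 * t)| < 1 := by
    rw [abs_mul]; nlinarith [abs_nonneg a, abs_nonneg (1 - 2 * t)]
  linarith [le_abs_self (a * (1 - 2 * t))]

theorem continuousOn_div_one_sub_mul_pow {g : ℝ → ℝ → ℝ} (hg : Continuous (Function.uncurry g))
    (n : ℕ) : ContinuousOn (Function.uncurry fun a t => g a t / (1 - a * (1 - 2 * t)) ^ n)
      (Ioo (-1) 1 ×ˢ Icc 0 1) := by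
  refine hg.continuousOn.div (by fun_prop) fun p hp => ?_
  have ha : |p.1| < 1 := abs_lt.2 hp.1
  exact (pow_pos (one_sub_mul_one_sub_two_mul_pos ha hp.2) n).ne'

variable (μ : Measure ℝ)

/- `f`, `f'` and `f''` at `(1 - a)/(1 + a)` are `(1 - a) I(a)`, `(1 + a)² J(a)` and
`-2 (1 + a)³ K(a)`; `remI`, `remJ`, `remK` are remainders of the geometric series of `(1 - u)⁻ⁿ`,
`n = 1, 2, 3`, at `u = a(1 - 2t)`. -/

noncomputable def integralI (a : ℝ) : ℝ := ∫ t in Icc 0 1, 1 / (1 - a * (1 - 2 * t)) ∂μ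
noncomputable def integralJ (a : ℝ) : ℝ := ∫ t in Icc 0 1, t / (1 - a * (1 - 2 * t)) ^ 2 ∂μ
noncomputable def integralK (a : ℝ) : ℝ :=
  ∫ t in Icc 0 1, t * (1 - t) / (1 - a * (1 - 2 * t)) ^ 3 ∂μ

noncomputable def remI (a : ℝ) : ℝ := ∫ t in Icc 0 1, (1 - 2 * t) ^ 5 / (1 - a * (1 - 2 * t)) ∂μ
noncomputable def remJ (a : ℝ) : ℝ :=
  ∫ t in Icc 0 1,
    t * (1 - 2 * t) ^ 4 * (5 - 4 * (a * (1 - 2 * t))) / (1 - a * (1 - 2 * t)) ^ 2 ∂μ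
noncomputable def remK (a : ℝ) : ℝ :=
  ∫ t in Icc 0 1, t * (1 - t) * (1 - 2 * t) ^ 3
    * (10 - 15 * (a * (1 - 2 * t)) + 6 * (a * (1 - 2 * t)) ^ 2) / (1 - a * (1 - 2 * t)) ^ 3 ∂μ

variable {μ} [IsFiniteMeasure μ]

theorem integrableOn_div_one_sub_mul_pow {g : ℝ → ℝ → ℝ} (hg : Continuous (Function.uncurry g))
    (n : ℕ) {a : ℝ} (ha : |a| < 1) :
    IntegrableOn (fun t => g a t / (1 - a * (1 - 2 * t)) ^ n) (Icc 0 1) μ := by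
  refine ContinuousOn.integrableOn_compact isCompact_Icc ?_
  exact (continuousOn_div_one_sub_mul_pow hg n).comp (by fun_prop)
    fun t ht => mk_mem_prod (abs_lt.1 ha) ht

theorem continuousAt_setIntegral_div_one_sub_mul_pow {g : ℝ → ℝ → ℝ}
    (hg : Continuous (Function.uncurry g)) (n : ℕ) :
    ContinuousAt (fun a => ∫ t in Icc 0 1, g a t / (1 - a * (1 - 2 * t)) ^ n ∂μ) 0 :=
  continuousAt_setIntegral_of_continuousOn isCompact_Icc (isCompact_Icc (a := -1/2) (b := 1/2))
    (Icc_mem_nhds (by norm_num) (by norm_num))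
    ((continuousOn_div_one_sub_mul_pow hg n).mono
      (prod_mono (Icc_subset_Ioo (by norm_num) (by norm_num)) subset_rfl))

theorem continuousAt_remI : ContinuousAt (remI μ) 0 := by
  unfold remI
  simpa using continuousAt_setIntegral_div_one_sub_mul_pow (μ := μ)
    (g := fun _ t => (1 - 2 * t) ^ 5) (by fun_prop) 1

theorem continuousAt_remJ : ContinuousAt (remJ μ) 0 :=
  continuousAt_setIntegral_div_one_sub_mul_pow
    (g := fun a t => t * (1 - 2 * t) ^ 4 * (5 - 4 * (a * (1 - 2 * t)))) (by fun_prop) 2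

theorem continuousAt_remK : ContinuousAt (remK μ) 0 :=
  continuousAt_setIntegral_div_one_sub_mul_pow (by fun_prop) 3

theorem integralI_eq (hprob : μ (Icc 0 1) = 1) (hodd : ∀ n, Odd n → cmoment μ n = 0) {a : ℝ}
    (ha : |a| < 1) :
    integralI μ a = 1 + cmoment μ 2 * a ^ 2 + cmoment μ 4 * a ^ 4 + a ^ 5 * remI μ a := by
  have hexp : integralI μ a = ∫ t in Icc 0 1, (1 + a * (1 - 2 * t) + a ^ 2 * (1 - 2 * t) ^ 2
      + a ^ 3 * (1 - 2 * t) ^ 3 + a ^ 4 * (1 - 2 * t) ^ 4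
      + a ^ 5 * ((1 - 2 * t) ^ 5 / (1 - a * (1 - 2 * t)))) ∂μ := by
    refine setIntegral_congr_fun measurableSet_Icc fun t ht => ?_
    have := (one_sub_mul_one_sub_two_mul_pos ha ht).ne'
    field_simp
    ring
  have hR : IntegrableOn (fun t => (1 - 2 * t) ^ 5 / (1 - a * (1 - 2 * t))) (Icc 0 1) μ := by
    simpa using integrableOn_div_one_sub_mul_pow (μ := μ) (g := fun _ t => (1 - 2 * t) ^ 5)
      (by fun_prop) 1 ha
  rw [hexp, setIntegral_quartic_add hprob hodd _ _ _ _ _ (hR.const_mul _), integral_const_mul,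
    remI]
  ring

theorem integralJ_eq (hprob : μ (Icc 0 1) = 1) (hodd : ∀ n, Odd n → cmoment μ n = 0) {a : ℝ}
    (ha : |a| < 1) :
    integralJ μ a = 1 / 2 - cmoment μ 2 * a + 3 / 2 * cmoment μ 2 * a ^ 2
      - 2 * cmoment μ 4 * a ^ 3 + a ^ 4 * remJ μ a := by
  have hexp : integralJ μ a = ∫ t in Icc 0 1, (1 / 2 + (a - 1 / 2) * (1 - 2 * t)
      + (3 / 2 * a ^ 2 - a) * (1 - 2 * t) ^ 2 + (2 * a ^ 3 - 3 / 2 * a ^ 2) * (1 - 2 * t) ^ 3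
      + (-2 * a ^ 3) * (1 - 2 * t) ^ 4 + a ^ 4 * (t * (1 - 2 * t) ^ 4
        * (5 - 4 * (a * (1 - 2 * t))) / (1 - a * (1 - 2 * t)) ^ 2)) ∂μ := by
    refine setIntegral_congr_fun measurableSet_Icc fun t ht => ?_
    have hd := pow_ne_zero 2 (one_sub_mul_one_sub_two_mul_pos ha ht).ne'
    rw [div_eq_iff hd, add_mul, mul_assoc (a ^ 4), div_mul_cancel₀ _ hd]
    ring
  have hR : IntegrableOn (fun t => t * (1 - 2 * t) ^ 4 * (5 - 4 * (a * (1 - 2 * t)))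
      / (1 - a * (1 - 2 * t)) ^ 2) (Icc 0 1) μ :=
    integrableOn_div_one_sub_mul_pow (g := fun a t => t * (1 - 2 * t) ^ 4
      * (5 - 4 * (a * (1 - 2 * t)))) (by fun_prop) 2 ha
  rw [hexp, setIntegral_quartic_add hprob hodd _ _ _ _ _ (hR.const_mul _), integral_const_mul,
    remJ]
  ring

theorem integralK_eq (hprob : μ (Icc 0 1) = 1) (hodd : ∀ n, Odd n → cmoment μ n = 0) {a : ℝ}
    (ha : |a| < 1) :
    integralK μ a = (1 - cmoment μ 2) / 4 + 3 / 2 * (cmoment μ 2 - cmoment μ 4) * a ^ 2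
      + a ^ 3 * remK μ a := by
  have hexp : integralK μ a = ∫ t in Icc 0 1, (1 / 4 + (3 / 4 * a) * (1 - 2 * t)
      + (3 / 2 * a ^ 2 - 1 / 4) * (1 - 2 * t) ^ 2 + (-3 / 4 * a) * (1 - 2 * t) ^ 3
      + (-3 / 2 * a ^ 2) * (1 - 2 * t) ^ 4 + a ^ 3 * (t * (1 - t) * (1 - 2 * t) ^ 3
        * (10 - 15 * (a * (1 - 2 * t)) + 6 * (a * (1 - 2 * t)) ^ 2)
        / (1 - a * (1 - 2 * t)) ^ 3)) ∂μ := by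
    refine setIntegral_congr_fun measurableSet_Icc fun t ht => ?_
    have hd := pow_ne_zero 3 (one_sub_mul_one_sub_two_mul_pos ha ht).ne'
    rw [div_eq_iff hd, add_mul, mul_assoc (a ^ 3), div_mul_cancel₀ _ hd]
    ring
  have hR : IntegrableOn (fun t => t * (1 - t) * (1 - 2 * t) ^ 3
      * (10 - 15 * (a * (1 - 2 * t)) + 6 * (a * (1 - 2 * t)) ^ 2)
      / (1 - a * (1 - 2 * t)) ^ 3) (Icc 0 1) μ :=
    integrableOn_div_one_sub_mul_pow (g := fun a t => t * (1 - t) * (1 - 2 * t) ^ 3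
      * (10 - 15 * (a * (1 - 2 * t)) + 6 * (a * (1 - 2 * t)) ^ 2)) (by fun_prop) 3 ha
  rw [hexp, setIntegral_quartic_add hprob hodd _ _ _ _ _ (hR.const_mul _), integral_const_mul,
    remK]
  ring

theorem continuousAt_integralI : ContinuousAt (integralI μ) 0 := by
  unfold integralI
  simpa using continuousAt_setIntegral_div_one_sub_mul_pow (μ := μ) (g := fun _ _ => 1)
    (by fun_prop) 1

theorem integralI_pos (hprob : μ (Icc 0 1) = 1) {a : ℝ} (ha : |a| < 1) : 0 < integralI μ a := by
  have hint : IntegrableOn (fun t => 1 / (1 - a * (1 - 2 * t))) (Icc 0 1) μ := by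
    simpa using integrableOn_div_one_sub_mul_pow (μ := μ) (g := fun _ _ => 1) (by fun_prop) 1 ha
  have hle : ∫ _ in Icc 0 1, (1 / 2 : ℝ) ∂μ ≤ integralI μ a := by
    refine setIntegral_mono_on (integrableOn_Icc_of_continuous continuous_const) hint
      measurableSet_Icc fun t ht => ?_
    have hpos := one_sub_mul_one_sub_two_mul_pos ha ht
    have hlt := one_sub_mul_one_sub_two_mul_pos (a := -a) (by rwa [abs_neg]) ht
    exact one_div_le_one_div_of_le hpos (by linarith)
  simp only [setIntegral_const, measureReal_def, hprob, ENNReal.toReal_one, one_smul] at hle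
  linarith

end Resolvent

section StieltjesDerivatives

theorem one_sub_mul_add_pos {x t : ℝ} (hx : 0 < x) (ht : t ∈ Icc (0 : ℝ) 1) :
    0 < (1 - t) * x + t := by
  rcases ht.1.eq_or_lt with rfl | ht0
  · simpa using hx
  · nlinarith [mul_nonneg (sub_nonneg.2 ht.2) hx.le]

theorem continuousOn_div_one_sub_mul_add_pow {g : ℝ → ℝ → ℝ}
    (hg : Continuous (Function.uncurry g)) (n : ℕ) :
    ContinuousOn (Function.uncurry fun x t => g x t / ((1 - t) * x + t) ^ n)
      (Ioi 0 ×ˢ Icc 0 1) :=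
  hg.continuousOn.div (by fun_prop) fun p hp => (pow_pos (one_sub_mul_add_pos hp.1 hp.2) n).ne'

variable {μ : Measure ℝ} [IsFiniteMeasure μ]

theorem hasDerivAt_setIntegral_of_Ioi {F F' : ℝ → ℝ → ℝ} {x : ℝ} (hx : 0 < x)
    (hF : ContinuousOn (Function.uncurry F) (Ioi 0 ×ˢ Icc 0 1))
    (hF' : ContinuousOn (Function.uncurry F') (Ioi 0 ×ˢ Icc 0 1))
    (hderiv : ∀ y > 0, ∀ t ∈ Icc (0 : ℝ) 1, HasDerivAt (F · t) (F' y t) y) :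
    HasDerivAt (fun y => ∫ t in Icc 0 1, F y t ∂μ) (∫ t in Icc 0 1, F' x t ∂μ) x := by
  have hK : Icc (x / 2) (2 * x) ⊆ Ioi 0 := fun y hy => show 0 < y by linarith [hy.1]
  exact hasDerivAt_setIntegral_of_continuousOn isCompact_Icc isCompact_Icc
    (Icc_mem_nhds (by linarith) (by linarith)) (hF.mono (prod_mono hK subset_rfl))
    (hF'.mono (prod_mono hK subset_rfl)) fun y hy t ht => hderiv y (hK hy) t ht

theorem hasDerivAt_setIntegral_div_one_sub_mul_add {x : ℝ} (hx : 0 < x) :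
    HasDerivAt (fun y => ∫ t in Icc 0 1, y / ((1 - t) * y + t) ∂μ)
      (∫ t in Icc 0 1, t / ((1 - t) * x + t) ^ 2 ∂μ) x := by
  refine hasDerivAt_setIntegral_of_Ioi hx
    (by simpa using continuousOn_div_one_sub_mul_add_pow (g := fun x _ => x) (by fun_prop) 1)
    (continuousOn_div_one_sub_mul_add_pow (g := fun _ t => t) (by fun_prop) 2) fun y hy t ht => ?_
  have hd := (one_sub_mul_add_pos hy ht).ne'
  have hlin : HasDerivAt (fun y => (1 - t) * y + t) (1 - t) y := by
    simpa using ((hasDerivAt_id y).const_mul (1 - t)).add_const t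
  refine ((hasDerivAt_id' y).fun_div hlin hd).congr_deriv ?_
  field_simp
  ring

theorem hasDerivAt_setIntegral_div_one_sub_mul_add_sq {x : ℝ} (hx : 0 < x) :
    HasDerivAt (fun y => ∫ t in Icc 0 1, t / ((1 - t) * y + t) ^ 2 ∂μ)
      (∫ t in Icc 0 1, -2 * (t * (1 - t)) / ((1 - t) * x + t) ^ 3 ∂μ) x := by
  refine hasDerivAt_setIntegral_of_Ioi hx
    (continuousOn_div_one_sub_mul_add_pow (g := fun _ t => t) (by fun_prop) 2)
    (continuousOn_div_one_sub_mul_add_pow (g := fun _ t => -2 * (t * (1 - t))) (by fun_prop) 3)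
    fun y hy t ht => ?_
  have hd := (one_sub_mul_add_pos hy ht).ne'
  have hlin : HasDerivAt (fun y => (1 - t) * y + t) (1 - t) y := by
    simpa using ((hasDerivAt_id y).const_mul (1 - t)).add_const t
  refine ((hasDerivAt_const y t).fun_div (hlin.fun_pow 2) (pow_ne_zero 2 hd)).congr_deriv ?_
  field_simp
  ring

theorem deriv_eq_setIntegral {f : ℝ → ℝ}
    (hf : ∀ x > (0 : ℝ), f x = ∫ t in Icc (0 : ℝ) 1, x / ((1 - t) * x + t) ∂μ) {x : ℝ}
    (hx : 0 < x) :
    deriv f x = ∫ t in Icc 0 1, t / ((1 - t) * x + t) ^ 2 ∂μ :=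
  ((hasDerivAt_setIntegral_div_one_sub_mul_add hx).congr_of_eventuallyEq
    (eventually_gt_nhds hx |>.mono hf)).deriv

theorem iteratedDeriv_two_eq_setIntegral {f : ℝ → ℝ}
    (hf : ∀ x > (0 : ℝ), f x = ∫ t in Icc (0 : ℝ) 1, x / ((1 - t) * x + t) ∂μ) {x : ℝ}
    (hx : 0 < x) :
    iteratedDeriv 2 f x = ∫ t in Icc 0 1, -2 * (t * (1 - t)) / ((1 - t) * x + t) ^ 3 ∂μ := by
  rw [iteratedDeriv_succ, iteratedDeriv_one]
  exact ((hasDerivAt_setIntegral_div_one_sub_mul_add_sq hx).congr_of_eventuallyEq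
    (eventually_gt_nhds hx |>.mono fun y hy => deriv_eq_setIntegral hf hy)).deriv

end StieltjesDerivatives

section OneSubDivOneAdd

theorem one_sub_mul_add_at_one_sub_div_one_add {a : ℝ} (ha : |a| < 1) (t : ℝ) :
    (1 - t) * ((1 - a) / (1 + a)) + t = (1 - a * (1 - 2 * t)) / (1 + a) := by
  have : 1 + a ≠ 0 := by linarith [neg_abs_le a]
  field_simp
  ring

theorem one_sub_div_one_add_pos {a : ℝ} (ha : |a| < 1) : 0 < (1 - a) / (1 + a) := by
  have := abs_lt.1 ha
  exact div_pos (by linarith) (by linarith)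

variable {μ : Measure ℝ} {f : ℝ → ℝ} {a : ℝ}

theorem apply_one_sub_div_one_add_eq_integralI
    (hf : ∀ x > (0 : ℝ), f x = ∫ t in Icc (0 : ℝ) 1, x / ((1 - t) * x + t) ∂μ) (ha : |a| < 1) :
    f ((1 - a) / (1 + a)) = (1 - a) * integralI μ a := by
  rw [hf _ (one_sub_div_one_add_pos ha), integralI, ← integral_const_mul]
  refine setIntegral_congr_fun measurableSet_Icc fun t ht => ?_
  have := (one_sub_mul_one_sub_two_mul_pos ha ht).ne'
  have : 1 + a ≠ 0 := by linarith [neg_abs_le a]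
  simp only [one_sub_mul_add_at_one_sub_div_one_add ha]
  field_simp

theorem deriv_one_sub_div_one_add_eq_integralJ [IsFiniteMeasure μ]
    (hf : ∀ x > (0 : ℝ), f x = ∫ t in Icc (0 : ℝ) 1, x / ((1 - t) * x + t) ∂μ) (ha : |a| < 1) :
    deriv f ((1 - a) / (1 + a)) = (1 + a) ^ 2 * integralJ μ a := by
  rw [deriv_eq_setIntegral hf (one_sub_div_one_add_pos ha), integralJ, ← integral_const_mul]
  refine setIntegral_congr_fun measurableSet_Icc fun t ht => ?_
  have := (one_sub_mul_one_sub_two_mul_pos ha ht).ne'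
  have : 1 + a ≠ 0 := by linarith [neg_abs_le a]
  simp only [one_sub_mul_add_at_one_sub_div_one_add ha]
  field_simp

theorem iteratedDeriv_two_one_sub_div_one_add_eq_integralK [IsFiniteMeasure μ]
    (hf : ∀ x > (0 : ℝ), f x = ∫ t in Icc (0 : ℝ) 1, x / ((1 - t) * x + t) ∂μ) (ha : |a| < 1) :
    iteratedDeriv 2 f ((1 - a) / (1 + a)) = -2 * (1 + a) ^ 3 * integralK μ a := by
  rw [iteratedDeriv_two_eq_setIntegral hf (one_sub_div_one_add_pos ha), integralK,
    ← integral_const_mul]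
  refine setIntegral_congr_fun measurableSet_Icc fun t ht => ?_
  have := (one_sub_mul_one_sub_two_mul_pos ha ht).ne'
  have : 1 + a ≠ 0 := by linarith [neg_abs_le a]
  simp only [one_sub_mul_add_at_one_sub_div_one_add ha]
  field_simp

end OneSubDivOneAdd

section CurvatureAlgebra

def curvatureNumerator (a i j k : ℝ) : ℝ :=
  -28 * a ^ 2 * (1 + a) ^ 2 * j ^ 2 + 4 * a * (a ^ 2 + 7 * a - 6) * (1 + a) * j * i
    - 32 * a ^ 2 * (1 - a) * (1 + a) * k * i + 4 * (1 - a ^ 2) ^ 2 * i ^ 3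
    + (3 * a ^ 3 + 5 * a ^ 2 + 8 * a - 4) * (1 - a) * i ^ 2

theorem scurv_eq_curvatureNumerator_div {f : ℝ → ℝ} {a i j k : ℝ} (ha : a ≠ 0) (ha₁ : 1 + a ≠ 0)
    (ha₂ : 1 - a ≠ 0) (hi : i ≠ 0) (hf₀ : f ((1 - a) / (1 + a)) = (1 - a) * i)
    (hf₁ : deriv f ((1 - a) / (1 + a)) = (1 + a) ^ 2 * j)
    (hf₂ : iteratedDeriv 2 f ((1 - a) / (1 + a)) = -2 * (1 + a) ^ 3 * k) :
    scurv f a = curvatureNumerator a i j k / (2 * a ^ 2 * (1 - a) * (1 + a) * i ^ 2) := by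
  rw [scurv, hf₀, hf₁, hf₂, curvatureNumerator]
  field_simp
  ring

/-- The coefficient of `a⁵` left over when the expansions of `I, J, K` (with remainders
`x, y, z`) are substituted into `curvatureNumerator`. -/
def curvatureRemainder (a p₁ p₂ x y z : ℝ) : ℝ :=
  p₂ * (60 + 12 * a + 60 * a ^ 2 - 32 * a ^ 3)
  + p₁ * (-20 * a)
  + p₂ ^ 2 * (-8 * a ^ 3 - 220 * a ^ 4 - 227 * a ^ 5 - 10 * a ^ 6 - 15 * a ^ 7)
  + p₁ * p₂ * (-40 * a - 80 * a ^ 2 + 96 * a ^ 3 + 200 * a ^ 4 + 24 * a ^ 5)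
  + p₁ ^ 2 * (64 * a - 24 * a ^ 3)
  + p₂ ^ 3 * (4 * a ^ 7 - 8 * a ^ 9 + 4 * a ^ 11)
  + p₁ * p₂ ^ 2 * (-24 * a ^ 5 + 12 * a ^ 7 + 12 * a ^ 9)
  + p₁ ^ 2 * p₂ * (-60 * a ^ 3 + 48 * a ^ 5 + 12 * a ^ 7)
  + p₁ ^ 3 * (-32 * a + 28 * a ^ 3 + 4 * a ^ 5)
  + x * (4 + 12 * a + 12 * a ^ 2 + 12 * a ^ 3 - 32 * a ^ 4)
  + p₂ * x * (112 * a ^ 4 + 16 * a ^ 5 - 118 * a ^ 6 - 12 * a ^ 7 - 30 * a ^ 8)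
  + p₁ * x * (-24 * a ^ 2 - 16 * a ^ 3 - 16 * a ^ 4 + 40 * a ^ 5 + 24 * a ^ 6)
  + p₂ ^ 2 * x * (12 * a ^ 8 - 24 * a ^ 10 + 12 * a ^ 12)
  + p₁ * p₂ * x * (-48 * a ^ 6 + 24 * a ^ 8 + 24 * a ^ 10)
  + p₁ ^ 2 * x * (-60 * a ^ 4 + 48 * a ^ 6 + 12 * a ^ 8)
  + y * (-24 - 24 * a - 24 * a ^ 2 - 24 * a ^ 3)
  + p₂ * y * (88 * a ^ 4 + 228 * a ^ 5 + 144 * a ^ 6 + 4 * a ^ 7)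
  + p₁ * y * (32 * a ^ 2 + 32 * a ^ 3 - 80 * a ^ 4 - 80 * a ^ 5)
  + z * (-32 + 32 * a ^ 2)
  + p₂ * z * (-32 * a ^ 4 + 32 * a ^ 6)
  + p₁ * z * (-32 * a ^ 2 + 32 * a ^ 4)
  + x ^ 2 * (8 * a ^ 5 + 12 * a ^ 6 - 3 * a ^ 7 - 2 * a ^ 8 - 15 * a ^ 9)
  + p₂ * x ^ 2 * (12 * a ^ 9 - 24 * a ^ 11 + 12 * a ^ 13)
  + p₁ * x ^ 2 * (-24 * a ^ 7 + 12 * a ^ 9 + 12 * a ^ 11)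
  + x * y * (-24 * a ^ 5 + 4 * a ^ 6 + 32 * a ^ 7 + 4 * a ^ 8)
  + y ^ 2 * (-28 * a ^ 5 - 56 * a ^ 6 - 28 * a ^ 7)
  + x * z * (-32 * a ^ 5 + 32 * a ^ 7)
  + x ^ 3 * (4 * a ^ 10 - 8 * a ^ 12 + 4 * a ^ 14)

theorem curvatureNumerator_expansion {a p₁ p₂ x y z i j k : ℝ}
    (hi : i = 1 + p₁ * a ^ 2 + p₂ * a ^ 4 + a ^ 5 * x)
    (hj : j = 1 / 2 - p₁ * a + 3 / 2 * p₁ * a ^ 2 - 2 * p₂ * a ^ 3 + a ^ 4 * y)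
    (hk : k = (1 - p₁) / 4 + 3 / 2 * (p₁ - p₂) * a ^ 2 + a ^ 3 * z) :
    curvatureNumerator a i j k = (18 * p₁ - 12) * (2 * a ^ 2 * (1 - a) * (1 + a) * i ^ 2)
      + a ^ 4 * ((100 * p₂ - 20 - 20 * p₁ - 60 * p₁ ^ 2)
        + a * curvatureRemainder a p₁ p₂ x y z) := by
  subst hi hj hk
  rw [curvatureNumerator, curvatureRemainder]
  ring

theorem scurv_eq_of_expansion {f : ℝ → ℝ} {a i j k p₁ p₂ x y z : ℝ} (ha : a ≠ 0) (ha₁ : |a| < 1)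
    (hi₀ : i ≠ 0) (hf₀ : f ((1 - a) / (1 + a)) = (1 - a) * i)
    (hf₁ : deriv f ((1 - a) / (1 + a)) = (1 + a) ^ 2 * j)
    (hf₂ : iteratedDeriv 2 f ((1 - a) / (1 + a)) = -2 * (1 + a) ^ 3 * k)
    (hi : i = 1 + p₁ * a ^ 2 + p₂ * a ^ 4 + a ^ 5 * x)
    (hj : j = 1 / 2 - p₁ * a + 3 / 2 * p₁ * a ^ 2 - 2 * p₂ * a ^ 3 + a ^ 4 * y)
    (hk : k = (1 - p₁) / 4 + 3 / 2 * (p₁ - p₂) * a ^ 2 + a ^ 3 * z) :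
    scurv f a = (18 * p₁ - 12) + ((100 * p₂ - 20 - 20 * p₁ - 60 * p₁ ^ 2)
      + a * curvatureRemainder a p₁ p₂ x y z) * (a ^ 2 / (2 * (1 - a) * (1 + a) * i ^ 2)) := by
  obtain ⟨ha₁', ha₂'⟩ := abs_lt.1 ha₁
  have hadd : 1 + a ≠ 0 := by linarith
  have hsub : 1 - a ≠ 0 := by linarith
  rw [scurv_eq_curvatureNumerator_div ha hadd hsub hi₀ hf₀ hf₁ hf₂,
    curvatureNumerator_expansion hi hj hk]
  field_simp

end CurvatureAlgebra

theorem tendsto_and_exists_ge_of_eventually_eq {g E D : ℝ → ℝ} {L W : ℝ} (hW : 0 < W)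
    (hE : ContinuousAt E 0) (hD : ContinuousAt D 0) (hD₀ : 0 < D 0)
    (hg : ∀ᶠ a in 𝓝[≠] 0, g a = L + (W + a * E a) * (a ^ 2 / D a)) :
    Tendsto g (𝓝[≠] 0) (𝓝 L) ∧ ∃ ε > (0 : ℝ), ∀ a : ℝ, 0 < |a| → |a| < ε → g a ≥ L := by
  have hcorr : ContinuousAt (fun a => (W + a * E a) * (a ^ 2 / D a)) 0 :=
    (continuousAt_const.add (continuousAt_id.mul hE)).mul
      ((continuousAt_id.pow 2).div hD hD₀.ne')
  have hcorr_nonneg : ∀ᶠ a in 𝓝 0, 0 ≤ (W + a * E a) * (a ^ 2 / D a) := by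
    have hlead : ∀ᶠ a in 𝓝 (0 : ℝ), 0 < W + a * E a :=
      (continuousAt_const.add (continuousAt_id.mul hE)).eventually
        (lt_mem_nhds (by simpa using hW))
    filter_upwards [hlead, hD.eventually (lt_mem_nhds hD₀)] with a h₁ h₂
    positivity
  constructor
  · have hlim := (hcorr.tendsto.const_add L).mono_left (nhdsWithin_le_nhds (s := {0}ᶜ))
    simp only [zero_pow two_ne_zero, zero_div, mul_zero, add_zero] at hlim
    exact hlim.congr' (hg.mono fun a ha => ha.symm)
  · obtain ⟨ε, hε, hball⟩ := Metric.eventually_nhds_iff.1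
      (eventually_nhdsWithin_iff.1 (hg.and (nhdsWithin_le_nhds hcorr_nonneg)))
    refine ⟨ε, hε, fun a ha₀ haε => ?_⟩
    obtain ⟨hga, hpos⟩ := hball (by simpa using haε) (abs_pos.1 ha₀)
    rw [hga]
    linarith

/-- moment criterion (Theorem 3.2 of the paper) for the scalar
curvature of the metric induced by a symmetric measure `μ` to have a local
minimum at the origin; `m`, `E₂`, `E₃` are the moments of the pushforward of `μ`
under `t ↦ 4t(1−t)`, and `σ² = E₂ − m²`. -/
theorem stmt_11 (μ : Measure ℝ) [IsProbabilityMeasure μ]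
    (hsupp : μ (Set.Icc 0 1) = 1)
    (hsym : ∀ X : Set ℝ, MeasurableSet X → X ⊆ Set.Icc 0 1 →
      μ X = μ ((fun t => 1 - t) '' X))
    (f : ℝ → ℝ)
    (hf : ∀ x > (0:ℝ), f x = ∫ t in Set.Icc (0:ℝ) 1, x / ((1 - t) * x + t) ∂μ)
    (m E2 E3 : ℝ)
    (hm : m = 4 * ∫ t in Set.Icc (0:ℝ) 1, t * (1 - t) ∂μ)
    (hE2 : E2 = 16 * ∫ t in Set.Icc (0:ℝ) 1, t^2 * (1 - t)^2 ∂μ)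
    (hE3 : E3 = 64 * ∫ t in Set.Icc (0:ℝ) 1, t^3 * (1 - t)^3 ∂μ)
    (hcond : m * (3 - 2*m) < 5 * (E2 - m^2) ∨
      (m * (3 - 2*m) = 5 * (E2 - m^2) ∧
        -44*m^3 + 70*m^2 + 114*m < 98 * E3)) :
    Tendsto (scurv f) (𝓝[≠] 0) (𝓝 (6 + 36 * iteratedDeriv 2 f 1)) ∧
    ∃ ε > (0:ℝ), ∀ a : ℝ, 0 < |a| → |a| < ε →
      scurv f a ≥ 6 + 36 * iteratedDeriv 2 f 1 := by
  have hodd : ∀ n, Odd n → cmoment μ n = 0 := fun n hn => cmoment_odd hsym hn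
  have hW : 0 < 100 * cmoment μ 4 - 20 - 20 * cmoment μ 2 - 60 * cmoment μ 2 ^ 2 :=
    quartic_coeff_pos_of_moment_condition (cmoment_even_nonneg 1) (cmoment_two_le_one hsupp)
      (cmoment_even_nonneg 3)
      (cmoment_four_sq_le hsupp hodd) (hm.trans (four_mul_setIntegral_mul_one_sub hsupp hodd))
      (hE2.trans (sixteen_mul_setIntegral_sq_mul_sq hsupp hodd))
      (hE3.trans (sixtyfour_mul_setIntegral_cube_mul_cube hsupp hodd)) hcond
  have hzero : |(0 : ℝ)| < 1 := by norm_num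
  have hlim : 6 + 36 * iteratedDeriv 2 f 1 = 18 * cmoment μ 2 - 12 := by
    have h := iteratedDeriv_two_one_sub_div_one_add_eq_integralK hf hzero
    rw [integralK_eq hsupp hodd hzero] at h
    norm_num at h
    rw [h]
    ring
  rw [hlim]
  refine tendsto_and_exists_ge_of_eventually_eq hW
    (E := fun a => curvatureRemainder a (cmoment μ 2) (cmoment μ 4) (remI μ a) (remJ μ a)
      (remK μ a))
    (D := fun a => 2 * (1 - a) * (1 + a) * integralI μ a ^ 2) ?_ ?_ ?_ ?_
  · have := continuousAt_remI (μ := μ)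
    have := continuousAt_remJ (μ := μ)
    have := continuousAt_remK (μ := μ)
    unfold curvatureRemainder
    fun_prop
  · have := continuousAt_integralI (μ := μ)
    fun_prop
  · have := integralI_pos hsupp hzero
    simp only [sub_zero, add_zero]
    positivity
  · filter_upwards [nhdsWithin_le_nhds (Ioo_mem_nhds (show (-1 : ℝ) < 0 by norm_num) one_pos),
      self_mem_nhdsWithin] with a ha ha₀
    have ha₁ : |a| < 1 := abs_lt.2 ha
    exact scurv_eq_of_expansion ha₀ ha₁ (integralI_pos hsupp ha₁).ne'
      (apply_one_sub_div_one_add_eq_integralI hf ha₁)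
      (deriv_one_sub_div_one_add_eq_integralJ hf ha₁)
      (iteratedDeriv_two_one_sub_div_one_add_eq_integralK hf ha₁) (integralI_eq hsupp hodd ha₁)
      (integralJ_eq hsupp hodd ha₁) (integralK_eq hsupp hodd ha₁)
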